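/- Let T be a finite weighted tree rooted at the start vertex v_s with at least two vertices. Then there exists a covering walk from v_s of minimal agent count (among all covering walks from v_s, with no requirement to return to v_s) whose last vertex is a leaf of T. -/

import Mathlib

/-! Strategic deployment: common definitions.

A walk is scanned with a state consisting of the set of already-visited
vertices, the number `curr` of currently available (non-settled) agents, and
the number `add` of additional agents (beyond `N = ∑ v, wV v`) recruited so
far.  Crossing an edge `e` requires `curr ≥ wE e` (topping up `add`
otherwise); the first visit of a vertex `v` settles `wV v` agents there. -/

namespace Deploy

structure St (V : Type*) (α : Type*) where
  visited : Finset V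
  curr : α
  add : α

variable {V : Type*} [DecidableEq V] {α : Type*} [AddCommMonoid α] [LinearOrder α] [IsOrderedAddMonoid α] [Sub α]

/-- Scan step for crossing an edge `e`. -/
def crossEdge (wE : Sym2 V → α) (e : Sym2 V) (s : St V α) : St V α :=
  if s.curr < wE e then ⟨s.visited, wE e, s.add + (wE e - s.curr)⟩ else s

/-- Scan step for visiting a vertex `v` (only first visits have an effect). -/
def visitVtx (wV : V → α) (v : V) (s : St V α) : St V α :=
  if v ∈ s.visited then s
  else if s.curr < wV v then ⟨insert v s.visited, 0, s.add + (wV v - s.curr)⟩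
  else ⟨insert v s.visited, s.curr - wV v, s.add⟩

variable {G : SimpleGraph V}

/-- Scanning a walk: alternately cross the next edge and visit the next vertex. -/
def scanWalk (wE : Sym2 V → α) (wV : V → α) : {u t : V} → G.Walk u t → St V α → St V α
  | _, _, .nil, s => s
  | u, _, .cons (v := v) _ p, s => scanWalk wE wV p (visitVtx wV v (crossEdge wE s(u, v) s))

/-- The agent count of a walk `p` starting at `vs`: the scan starts with
`curr = N = ∑ v, wV v` and `add = 0`, first visiting the start vertex; the
agent count is `N` plus the final value of `add`. -/
def agentCount [Fintype V] (wE : Sym2 V → α) (wV : V → α) {vs t : V} (p : G.Walk vs t) : α :=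
  (∑ v, wV v) + (scanWalk wE wV p (visitVtx wV vs ⟨∅, ∑ v, wV v, 0⟩)).add

/-- A walk is covering if every vertex of the graph appears on it. -/
def IsCovering {vs t : V} (p : G.Walk vs t) : Prop := ∀ v : V, v ∈ p.support

end Deploy

namespace Deploy

/-- A leaf of a rooted tree: a vertex of degree 1 different from the root. -/
def IsLeaf {V : Type*} (T : SimpleGraph V) (vs b : V) : Prop :=
  Nat.card (T.neighborSet b) = 1 ∧ b ≠ vs

end Deploy

/-! Agent counts of covering walks take only finitely many values, so an optimal covering walk
exists. Dropping the end of a walk never raises its agent count, so a shortest optimal walk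
reaches its last vertex `t` for the first time at its final step. The rest of the walk avoids `t`
and covers every other vertex, so in a tree `t` has a single neighbour. -/

namespace SimpleGraph

variable {V : Type*} {G : SimpleGraph V}

/-- In an acyclic graph a walk avoiding `t` meets at most one neighbour of `t`: two distinct
ones would be joined both through `t` and along the walk. -/
lemma IsAcyclic.eq_of_adj_of_mem_support [DecidableEq V] (hG : G.IsAcyclic) {x y t a b : V}
    {p : G.Walk x y} (ht : t ∉ p.support) (ha : a ∈ p.support) (hb : b ∈ p.support)
    (hta : G.Adj t a) (htb : G.Adj t b) : a = b := by
  by_contra hab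
  let w : G.Walk a b := (p.takeUntil a ha).reverse.append (p.takeUntil b hb)
  have hw : t ∉ w.support := by
    simp only [w, Walk.mem_support_append_iff, Walk.support_reverse, List.mem_reverse, not_or]
    exact ⟨fun h => ht (p.support_takeUntil_subset_support ha h),
      fun h => ht (p.support_takeUntil_subset_support hb h)⟩
  have hpath : (Walk.cons hta.symm (Walk.cons htb .nil)).IsPath := by
    simp [Walk.isPath_def, hta.ne', htb.ne, hab]
  have huniq := (hG.subsingleton_path a b).elim w.toPath ⟨_, hpath⟩
  exact hw (w.support_toPath_subset_support (by rw [huniq]; simp))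

end SimpleGraph

namespace Deploy

open SimpleGraph

section Walks

variable {V : Type*} {G : SimpleGraph V}

lemma exists_isCovering [Finite V] (hG : G.Connected) (vs : V) :
    ∃ q : G.Walk vs vs, IsCovering q := by
  obtain ⟨l, -, hl⟩ := Finite.exists_univ_list V
  suffices ∀ l : List V, ∃ q : G.Walk vs vs, ∀ v ∈ l, v ∈ q.support from
    (this l).imp fun q hq v => hq v (hl v)
  intro l
  induction l with
  | nil => exact ⟨.nil, by simp⟩
  | cons v l ih =>
    obtain ⟨q, hq⟩ := ih
    obtain ⟨w⟩ := hG.preconnected vs v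
    refine ⟨(w.append w.reverse).append q, fun x hx => ?_⟩
    rcases List.mem_cons.mp hx with rfl | hx
    · simp
    · simp [hq x hx]

lemma mem_support_of_isCovering_concat {vs u t v : V} {p : G.Walk vs u} {h : G.Adj u t}
    (hp : IsCovering (p.concat h)) (hv : v ≠ t) : v ∈ p.support := by
  simpa [hv] using hp v

end Walks

variable {V α : Type*} [DecidableEq V] [AddCommMonoid α] [LinearOrder α] [Sub α]
  {G : SimpleGraph V} (wE : Sym2 V → α) (wV : V → α)

lemma scanWalk_append {u v t : V} (p : G.Walk u v) (q : G.Walk v t) (s : St V α) :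
    scanWalk wE wV (p.append q) s = scanWalk wE wV q (scanWalk wE wV p s) := by
  induction p generalizing s with
  | nil => rfl
  | cons h p ih => exact ih _ _

lemma visited_subset_scanWalk {u t : V} (p : G.Walk u t) (s : St V α) :
    s.visited ⊆ (scanWalk wE wV p s).visited := by
  induction p generalizing s with
  | nil => exact Finset.Subset.refl _
  | cons h p ih =>
    refine subset_trans ?_ (ih _)
    unfold visitVtx crossEdge
    split_ifs <;> simp [Finset.subset_insert]

lemma mem_visited_visitVtx (v : V) (s : St V α) : v ∈ (visitVtx wV v s).visited := by
  unfold visitVtx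
  split_ifs <;> simp_all

lemma support_subset_visited_scanWalk {u t : V} (p : G.Walk u t) (s : St V α)
    (hu : u ∈ s.visited) : ∀ v ∈ p.support, v ∈ (scanWalk wE wV p s).visited := by
  induction p generalizing s with
  | nil =>
    rintro v hv
    rw [Walk.support_nil, List.mem_singleton] at hv
    exact hv ▸ hu
  | @cons u w t h p ih =>
    intro v hv
    rcases List.mem_cons.mp hv with rfl | hv
    · refine visited_subset_scanWalk wE wV p _ ?_
      unfold visitVtx crossEdge
      split_ifs <;> simp_all
    · exact ih _ (mem_visited_visitVtx wV w _) v hv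

lemma add_le_scanWalk_add [CanonicallyOrderedAdd α] {u t : V} (p : G.Walk u t) (s : St V α) :
    s.add ≤ (scanWalk wE wV p s).add := by
  induction p generalizing s with
  | nil => exact le_rfl
  | cons h p ih =>
    refine le_trans ?_ (ih _)
    unfold visitVtx crossEdge
    split_ifs <;> simp [add_assoc]

section Conservation

variable [CanonicallyOrderedAdd α] [OrderedSub α]

/-- Conservation of agents: the `N` initial agents and the recruited ones are either still in
hand or settled on a visited vertex. -/
def Balanced (N : α) (s : St V α) : Prop :=
  s.add + N = s.curr + ∑ w ∈ s.visited, wV w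

omit [DecidableEq V] in
lemma balanced_crossEdge {N : α} (e : Sym2 V) {s : St V α} (h : Balanced wV N s) :
    Balanced wV N (crossEdge wE e s) := by
  unfold crossEdge
  split_ifs with hlt
  · show s.add + (wE e - s.curr) + N = wE e + ∑ w ∈ s.visited, wV w
    rw [add_right_comm, h, add_right_comm, add_tsub_cancel_of_le hlt.le]
  · exact h

lemma balanced_visitVtx {N : α} (v : V) {s : St V α} (h : Balanced wV N s) :
    Balanced wV N (visitVtx wV v s) := by
  unfold visitVtx
  split_ifs with hv hlt
  · exact h
  · show s.add + (wV v - s.curr) + N = 0 + ∑ w ∈ insert v s.visited, wV w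
    rw [Finset.sum_insert hv, zero_add, add_right_comm, h, add_right_comm,
      add_tsub_cancel_of_le hlt.le]
  · show s.add + N = s.curr - wV v + ∑ w ∈ insert v s.visited, wV w
    rw [Finset.sum_insert hv, ← add_assoc, tsub_add_cancel_of_le (not_lt.mp hlt), h]

lemma balanced_scanWalk {N : α} {u t : V} (p : G.Walk u t) {s : St V α}
    (h : Balanced wV N s) : Balanced wV N (scanWalk wE wV p s) := by
  induction p generalizing s with
  | nil => exact h
  | cons hadj p ih => exact ih (balanced_visitVtx wV _ (balanced_crossEdge wE wV _ h))

/-- `curr` was last reset to `N` or to an edge weight, and has since paid for settling the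
vertices of `W`. -/
def CurrIsResidual (N : α) (s : St V α) : Prop :=
  ∃ a ∈ insert N (Set.range wE), ∃ W ⊆ s.visited, s.curr = a - ∑ w ∈ W, wV w

omit [DecidableEq V] [CanonicallyOrderedAdd α] in
lemma currIsResidual_crossEdge {N : α} (e : Sym2 V) {s : St V α}
    (h : CurrIsResidual wE wV N s) : CurrIsResidual wE wV N (crossEdge wE e s) := by
  unfold crossEdge
  split_ifs
  · exact ⟨wE e, Set.mem_insert_of_mem _ ⟨e, rfl⟩, ∅, Finset.empty_subset _, by simp⟩
  · exact h

lemma currIsResidual_visitVtx {N : α} (v : V) {s : St V α}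
    (h : CurrIsResidual wE wV N s) : CurrIsResidual wE wV N (visitVtx wV v s) := by
  unfold visitVtx
  split_ifs with hv hlt
  · exact h
  all_goals
    obtain ⟨a, ha, W, hW, hc⟩ := h
    have hcurr : a - ∑ w ∈ insert v W, wV w = s.curr - wV v := by
      rw [Finset.sum_insert fun hvW => hv (hW hvW), add_comm, ← tsub_tsub, ← hc]
    refine ⟨a, ha, insert v W, Finset.insert_subset_insert v hW, ?_⟩
  · rw [hcurr, tsub_eq_zero_of_le hlt.le]
  · exact hcurr.symm

lemma currIsResidual_scanWalk {N : α} {u t : V} (p : G.Walk u t) {s : St V α}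
    (h : CurrIsResidual wE wV N s) : CurrIsResidual wE wV N (scanWalk wE wV p s) := by
  induction p generalizing s with
  | nil => exact h
  | cons hadj p ih =>
    exact ih (currIsResidual_visitVtx wE wV _ (currIsResidual_crossEdge wE wV _ h))

/-- Once every vertex is settled, conservation forces `add = curr`. -/
lemma agentCount_mem_of_isCovering [Fintype V] [IsRightCancelAdd α] {vs t : V}
    {p : G.Walk vs t} (hp : IsCovering p) :
    agentCount wE wV p ∈ Set.image2 (fun a (W : Finset V) => (∑ v, wV v) + (a - ∑ w ∈ W, wV w))
      (insert (∑ v, wV v) (Set.range wE)) Set.univ := by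
  set s₀ : St V α := ⟨∅, ∑ v, wV v, 0⟩
  set s := scanWalk wE wV p (visitVtx wV vs s₀)
  have hbal : Balanced wV (∑ v, wV v) s :=
    balanced_scanWalk wE wV p (balanced_visitVtx wV vs (by simp [Balanced, s₀]))
  obtain ⟨a, ha, W, -, hcurr⟩ : CurrIsResidual wE wV (∑ v, wV v) s :=
    currIsResidual_scanWalk wE wV p (currIsResidual_visitVtx wE wV vs
      ⟨_, Set.mem_insert _ _, ∅, Finset.empty_subset _, by simp [s₀]⟩)
  have hvisited : s.visited = Finset.univ :=
    Finset.eq_univ_of_forall fun v =>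
      support_subset_visited_scanWalk wE wV p _ (mem_visited_visitVtx wV vs s₀) v (hp v)
  rw [Balanced, hvisited] at hbal
  exact ⟨a, ha, W, Set.mem_univ _, by rw [agentCount, add_right_cancel hbal, hcurr]⟩

end Conservation

section Optimal

variable [Fintype V] [CanonicallyOrderedAdd α]

lemma agentCount_le_append {vs u t : V} (p : G.Walk vs u) (q : G.Walk u t) :
    agentCount wE wV p ≤ agentCount wE wV (p.append q) := by
  unfold agentCount
  rw [scanWalk_append]
  exact add_le_add_right (add_le_scanWalk_add wE wV q _) _

def IsOptimalCovering {vs t : V} (p : G.Walk vs t) : Prop :=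
  IsCovering p ∧ ∀ (u : V) (q : G.Walk vs u), IsCovering q → agentCount wE wV p ≤ agentCount wE wV q

lemma exists_isOptimalCovering [OrderedSub α] [IsRightCancelAdd α] (hG : G.Connected)
    (vs : V) : ∃ (t : V) (p : G.Walk vs t), IsOptimalCovering wE wV p := by
  let S := {x | ∃ (t : V) (p : G.Walk vs t), IsCovering p ∧ agentCount wE wV p = x}
  have hfin : S.Finite := (((Set.finite_range wE).insert _).image2 _ Set.finite_univ).subset
    fun _ ⟨_, _, hp, hx⟩ => hx ▸ agentCount_mem_of_isCovering wE wV hp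
  obtain ⟨q, hq⟩ := exists_isCovering hG vs
  obtain ⟨_, ⟨t, p, hp, rfl⟩, hmin⟩ := Set.exists_min_image S id hfin ⟨_, vs, q, hq, rfl⟩
  exact ⟨t, p, hp, fun u q hq => hmin _ ⟨u, q, hq, rfl⟩⟩

variable {wE wV}

lemma IsOptimalCovering.of_append {vs u t : V} {p : G.Walk vs u} {r : G.Walk u t}
    (h : IsOptimalCovering wE wV (p.append r)) (hp : IsCovering p) :
    IsOptimalCovering wE wV p :=
  ⟨hp, fun v q hq => (agentCount_le_append wE wV p r).trans (h.2 v q hq)⟩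

lemma IsOptimalCovering.exists_concat [Nontrivial V] {vs t₀ : V} {q : G.Walk vs t₀}
    (hq : IsOptimalCovering wE wV q) :
    ∃ (u t : V) (p : G.Walk vs u) (h : G.Adj u t),
      IsOptimalCovering wE wV (p.concat h) ∧ t ∉ p.support := by
  induction q using Walk.concatRec with
  | Hnil =>
    obtain ⟨x, y, hxy⟩ := exists_pair_ne V
    have hx := hq.1 x
    have hy := hq.1 y
    simp_all
  | @Hconcat vs u t p h ih =>
    by_cases ht : t ∈ p.support
    · refine ih ((Walk.concat_eq_append p h ▸ hq).of_append fun v => ?_)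
      by_cases hv : v = t
      · exact hv ▸ ht
      · exact mem_support_of_isCovering_concat hq.1 hv
    · exact ⟨u, t, p, h, hq, ht⟩

end Optimal

end Deploy

/-- for a finite weighted tree `T` rooted at `v_s` with at least
two vertices, there exists a covering walk from `v_s` of minimal agent count
(among all covering walks from `v_s`, with no requirement to return) whose
last vertex is a leaf of `T`. -/
theorem no_return_ends_at_leaf
    {V : Type*} [Fintype V] [DecidableEq V] (T : SimpleGraph V) (hT : T.IsTree)
    (hcard : 1 < Fintype.card V)
    (wE : Sym2 V → NNReal) (wV : V → NNReal) (vs : V) :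
    ∃ (t : V) (p : T.Walk vs t),
      Deploy.IsCovering p ∧
      (∀ (u : V) (q : T.Walk vs u), Deploy.IsCovering q →
        Deploy.agentCount wE wV p ≤ Deploy.agentCount wE wV q) ∧
      Deploy.IsLeaf T vs t := by
  have := Fintype.one_lt_card_iff_nontrivial.mp hcard
  obtain ⟨t₀, q, hq⟩ := Deploy.exists_isOptimalCovering wE wV hT.connected vs
  obtain ⟨u, t, p, hut, ⟨hcov, hopt⟩, ht⟩ := hq.exists_concat
  have hneighbor : T.neighborSet t = {u} := Set.ext fun a =>
    ⟨fun hta => hT.isAcyclic.eq_of_adj_of_mem_support ht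
      (Deploy.mem_support_of_isCovering_concat hcov hta.ne') p.end_mem_support hta hut.symm,
    fun hau => hau ▸ hut.symm⟩
  refine ⟨t, p.concat hut, hcov, hopt, ?_, fun h => ht (h ▸ p.start_mem_support)⟩
  rw [hneighbor, Nat.card_unique]
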